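/- Let Z be a real-valued random variable with E[e^Z] < ∞, and set c = E[e^Z]. Then the function y ↦ E[(c − e^Z) · 1_{Z < y}] attains its maximum over y ∈ ℝ ∪ {∞} at y = log c. In particular, for every y, E[(c − e^Z) 1_{Z < y}] ≤ E[(c − e^Z) 1_{Z < log c}]. -/
import Mathlib


open MeasureTheory Set

/-- The threshold optimization underlying the McKean optimal stopping problem:
y ↦ E[(c − e^Z)1_{Z<y}] is maximized (over ℝ ∪ {∞}) at y = log c, where c = E[e^Z]. -/
theorem mcKean_threshold_optimal
    {Ω : Type*} [MeasurableSpace Ω] (P : Measure Ω) [IsProbabilityMeasure P]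
    (Z : Ω → ℝ) (hZ : Integrable (fun ω => Real.exp (Z ω)) P)
    (c : ℝ) (hc : c = ∫ ω, Real.exp (Z ω) ∂P) :
    (∀ y : ℝ,
      (∫ ω, indicator {ω | Z ω < y} (fun ω => c - Real.exp (Z ω)) ω ∂P) ≤
        ∫ ω, indicator {ω | Z ω < Real.log c} (fun ω => c - Real.exp (Z ω)) ω ∂P) ∧
    (∫ ω, (c - Real.exp (Z ω)) ∂P) ≤
      ∫ ω, indicator {ω | Z ω < Real.log c} (fun ω => c - Real.exp (Z ω)) ω ∂P := by
  have hcpos : 0 < c := by rw [hc]; exact integral_exp_pos hZ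
  have hEmeas : AEMeasurable (fun ω => Real.exp (Z ω)) P := hZ.aemeasurable
  have key : ∀ y : ℝ, Integrable
      (fun ω => indicator {ω | Z ω < y} (fun ω => c - Real.exp (Z ω)) ω) P := by
    intro y
    have heq : (fun ω => indicator {ω | Z ω < y} (fun ω => c - Real.exp (Z ω)) ω)
        = fun ω => if Real.exp (Z ω) < Real.exp y then c - Real.exp (Z ω) else 0 := by
      funext ω
      simp only [indicator_apply, mem_setOf_eq, Real.exp_lt_exp]
    rw [heq]
    have hF : Measurable (fun t : ℝ => if t < Real.exp y then c - t else 0) := by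
      exact Measurable.ite (measurableSet_lt measurable_id measurable_const)
        (measurable_const.sub measurable_id) measurable_const
    have hmeas : AEStronglyMeasurable
        (fun ω => if Real.exp (Z ω) < Real.exp y then c - Real.exp (Z ω) else 0) P :=
      (hF.comp_aemeasurable hEmeas).aestronglyMeasurable
    refine Integrable.mono (((integrable_const |c|).add hZ)) hmeas ?_
    filter_upwards with ω
    have h1 : 0 < Real.exp (Z ω) := Real.exp_pos _
    simp only [Pi.add_apply, Real.norm_eq_abs]
    rw [abs_of_nonneg (by positivity : (0:ℝ) ≤ |c| + Real.exp (Z ω))]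
    split_ifs with h
    · calc |c - Real.exp (Z ω)| ≤ |c| + |Real.exp (Z ω)| := abs_sub _ _
        _ = |c| + Real.exp (Z ω) := by rw [abs_of_pos h1]
    · simp only [abs_zero]; positivity
  have hpt : ∀ y ω, indicator {ω | Z ω < y} (fun ω => c - Real.exp (Z ω)) ω ≤
      indicator {ω | Z ω < Real.log c} (fun ω => c - Real.exp (Z ω)) ω := by
    intro y ω
    have hiff : Z ω < Real.log c ↔ Real.exp (Z ω) < c := Real.lt_log_iff_exp_lt hcpos
    simp only [indicator_apply, mem_setOf_eq]
    split_ifs with h1 h2 h2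
    · exact le_refl _
    · have : c ≤ Real.exp (Z ω) := le_of_not_gt (fun h => h2 (hiff.mpr h))
      linarith
    · have : Real.exp (Z ω) < c := hiff.mp h2
      linarith
    · exact le_refl _
  have hpt2 : ∀ ω, c - Real.exp (Z ω) ≤
      indicator {ω | Z ω < Real.log c} (fun ω => c - Real.exp (Z ω)) ω := by
    intro ω
    have hiff : Z ω < Real.log c ↔ Real.exp (Z ω) < c := Real.lt_log_iff_exp_lt hcpos
    simp only [indicator_apply, mem_setOf_eq]
    split_ifs with h1
    · exact le_refl _
    · have : c ≤ Real.exp (Z ω) := le_of_not_gt (fun h => h1 (hiff.mpr h))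
      linarith
  constructor
  · intro y
    exact integral_mono (key y) (key _) (hpt y)
  · exact integral_mono ((integrable_const c).sub hZ) (key _) hpt2
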